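/- Let k ≥ 2, T ≥ 1, and ε > 0, and set l = k(e^ε(ε−1)+1)/(e^ε−1)². Let q^s denote the distribution on [k] with k−s entries equal to 1/(se^ε+k−s) and s entries equal to e^ε/(se^ε+k−s). Then every probability distribution P on ([k])^T satisfying P(x) ≤ e^ε P(x′) for all neighboring x, x′ ∈ [k]^T has Shannon entropy H(P) ≥ T · min_{s ∈ {⌈l⌉,⌊l⌋}} H(q^s). -/

import Mathlib

/-!
By the chain rule, the entropy of `P` on `[k]^T` is the entropy of the law `q` of the first
sample plus the `q`-average of the entropies of the conditional laws of the other `T - 1`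
samples, and all of these laws are again `ε`-DP; so induction on `T` reduces the bound to
`T = 1`. There the `ε`-DP distributions form a compact convex set on which entropy is strictly
concave, so a minimizer `p` exists and is not the midpoint of two other points of the set.
If some `p a` lay strictly between `m = min p` and `e^ε m`, one could perturb `p` in both
directions inside the set; hence `p` only takes the values `m` and `e^ε m`, i.e. it is a
permutation of some `q^s`. Finally `s ↦ H(q^s)` has derivative
`(e^ε - 1)² (s - l) / (s (e^ε - 1) + k)²`, so over integers it is smallest at `⌊l⌋` or `⌈l⌉`.
-/

open Finset

/-- Shannon entropy of a function on a finite type (natural log, `0 log 0 = 0`). -/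
noncomputable def Hent {S : Type*} [Fintype S] (q : S → ℝ) : ℝ :=
  -∑ s, q s * Real.log (q s)

def IsDist {S : Type*} [Fintype S] (q : S → ℝ) : Prop :=
  (∀ s, 0 ≤ q s) ∧ ∑ s, q s = 1

def Neighbor {T : ℕ} {α : Type*} (x x' : Fin T → α) : Prop :=
  ∃ t, x t ≠ x' t ∧ ∀ s, s ≠ t → x s = x' s

/-- The distribution `q^s` on `[k]`: `k − s` entries equal to `1/(s e^ε + k − s)`
and `s` entries equal to `e^ε/(s e^ε + k − s)`. -/
noncomputable def keyDist (k s : ℕ) (ε : ℝ) : Fin k → ℝ := fun j =>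
  if (j : ℕ) < k - s then 1 / ((s : ℝ) * Real.exp ε + ((k - s : ℕ) : ℝ))
  else Real.exp ε / ((s : ℝ) * Real.exp ε + ((k - s : ℕ) : ℝ))

open Real

theorem Hent_eq_sum_negMulLog {S : Type*} [Fintype S] (q : S → ℝ) :
    Hent q = ∑ s, negMulLog (q s) := by
  simp [Hent, negMulLog_eq_neg]

theorem continuous_Hent {S : Type*} [Fintype S] : Continuous (Hent : (S → ℝ) → ℝ) :=
  (continuous_finsetSum _ fun s _ => continuous_mul_log.comp (continuous_apply s)).neg

theorem strictConcaveOn_Hent {S : Type*} [Fintype S] :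
    StrictConcaveOn ℝ (Set.Ici (0 : S → ℝ)) Hent := by
  refine ⟨convex_Ici 0, fun x hx y hy hxy a b ha hb hab => ?_⟩
  obtain ⟨s, hs⟩ := Function.ne_iff.1 hxy
  simp only [Hent_eq_sum_negMulLog, smul_eq_mul, mul_sum, ← sum_add_distrib, Pi.add_apply,
    Pi.smul_apply]
  refine sum_lt_sum (fun t _ => ?_) ⟨s, mem_univ s, ?_⟩
  · exact concaveOn_negMulLog.2 (hx t) (hy t) ha.le hb.le hab
  · exact strictConcaveOn_negMulLog.2 (hx s) (hy s) hs ha hb hab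

theorem sum_negMulLog_eq_negMulLog_sum_add {β : Type*} [Fintype β] (f : β → ℝ)
    (hf : ∀ b, 0 ≤ f b) :
    ∑ b, negMulLog (f b) =
      negMulLog (∑ b, f b) + (∑ b, f b) * Hent (fun b => f b / ∑ b', f b') := by
  set Z := ∑ b, f b
  rcases eq_or_ne Z 0 with hZ0 | hZ0
  · have hf0 : ∀ b, f b = 0 := fun b =>
      (sum_eq_zero_iff_of_nonneg fun b _ => hf b).1 hZ0 b (mem_univ b)
    simp [hf0, hZ0]
  · have hsplit : ∀ b, negMulLog (f b) = f b / Z * negMulLog Z + Z * negMulLog (f b / Z) :=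
      fun b => by rw [← negMulLog_mul, mul_div_cancel₀ _ hZ0]
    rw [Hent_eq_sum_negMulLog, sum_congr rfl fun b _ => hsplit b, sum_add_distrib, ← sum_mul,
      ← sum_div, div_self hZ0, one_mul, ← mul_sum]

/-- `H(q^s)`, extended to real `s`. -/
noncomputable def keyEntropy (k : ℕ) (ε s : ℝ) : ℝ :=
  log (s * (exp ε - 1) + k) - s * ε * exp ε / (s * (exp ε - 1) + k)

/-- The paper's `l`. -/
noncomputable def keyThreshold (k : ℕ) (ε : ℝ) : ℝ :=
  k * (exp ε * (ε - 1) + 1) / (exp ε - 1) ^ 2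

theorem negMulLog_twoLevel_eq_keyEntropy {k n₀ n₁ : ℕ} (hn : n₀ + n₁ = k) {ε m : ℝ}
    (hm : n₀ * m + n₁ * (exp ε * m) = 1) :
    n₀ * negMulLog m + n₁ * negMulLog (exp ε * m) = keyEntropy k ε n₁ := by
  have hk : (k : ℝ) = n₀ + n₁ := by exact_mod_cast hn.symm
  have hmD : m * (n₁ * (exp ε - 1) + k) = 1 := by rw [hk]; linear_combination hm
  set D : ℝ := n₁ * (exp ε - 1) + k
  have hminv : m = D⁻¹ := eq_inv_of_mul_eq_one_left hmD
  rw [keyEntropy, negMulLog, negMulLog, log_mul (exp_pos ε).ne' (left_ne_zero_of_mul_eq_one hmD),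
    log_exp, hminv, log_inv, div_eq_mul_inv, ← hminv]
  linear_combination log D * hm

theorem Hent_keyDist {k s : ℕ} (hk : 0 < k) (hs : s ≤ k) (ε : ℝ) :
    Hent (keyDist k s ε) = keyEntropy k ε s := by
  set D : ℝ := s * exp ε + ((k - s : ℕ) : ℝ)
  have hD : 0 < D := by
    rcases hs.lt_or_eq with hlt | rfl
    · have : (0 : ℝ) < ((k - s : ℕ) : ℝ) := by exact_mod_cast Nat.sub_pos_of_lt hlt
      positivity
    · simp only [D, Nat.sub_self, Nat.cast_zero, add_zero]
      positivity
  have hcard : #{j : Fin k | ¬ (j : ℕ) < k - s} = s := by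
    have := card_filter_add_card_filter_not (s := univ) fun j : Fin k => (j : ℕ) < k - s
    rw [Fin.card_filter_val_lt, card_univ, Fintype.card_fin] at this
    omega
  have hsum : Hent (keyDist k s ε) =
      ((k - s : ℕ) : ℝ) * negMulLog D⁻¹ + s * negMulLog (exp ε * D⁻¹) := by
    simp only [Hent_eq_sum_negMulLog, keyDist, apply_ite negMulLog, sum_ite, sum_const,
      Fin.card_filter_val_lt, hcard, nsmul_eq_mul, div_eq_mul_inv, one_mul,
      min_eq_right (Nat.sub_le k s)]
    rfl
  rw [hsum]
  refine negMulLog_twoLevel_eq_keyEntropy (Nat.sub_add_cancel hs) ?_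
  field_simp
  ring

theorem hasDerivAt_keyEntropy {k : ℕ} {ε x : ℝ} (hε : ε ≠ 0) (hx : 0 < x * (exp ε - 1) + k) :
    HasDerivAt (keyEntropy k ε)
      ((exp ε - 1) ^ 2 * (x - keyThreshold k ε) / (x * (exp ε - 1) + k) ^ 2) x := by
  have hE : exp ε - 1 ≠ 0 := sub_ne_zero.2 (mt (exp_eq_one_iff ε).1 hε)
  have hD : HasDerivAt (fun y => y * (exp ε - 1) + k) (exp ε - 1) x := by
    simpa using ((hasDerivAt_id x).mul_const (exp ε - 1)).add_const (k : ℝ)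
  have hN : HasDerivAt (fun y => y * ε * exp ε) (ε * exp ε) x := by
    simpa [mul_assoc] using (hasDerivAt_id x).mul_const (ε * exp ε)
  refine ((hD.log hx.ne').sub (hN.div hD hx.ne')).congr_deriv ?_
  unfold keyThreshold
  field_simp
  ring

theorem keyThreshold_nonneg (k : ℕ) (ε : ℝ) : 0 ≤ keyThreshold k ε := by
  have h : exp ε * (1 - ε) ≤ 1 := by
    have := mul_le_mul_of_nonneg_left (add_one_le_exp (-ε)) (exp_pos ε).le
    rwa [← exp_add, add_neg_cancel, exp_zero, neg_add_eq_sub] at this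
  unfold keyThreshold
  have : 0 ≤ exp ε * (ε - 1) + 1 := by linarith
  positivity

theorem keyThreshold_le (k : ℕ) {ε : ℝ} (hε : 0 < ε) : keyThreshold k ε ≤ k := by
  have hE : 0 < exp ε - 1 := sub_pos.2 (one_lt_exp_iff.2 hε)
  have h : ε ≤ exp ε - 1 := by linarith [add_one_le_exp ε]
  rw [keyThreshold, div_le_iff₀ (by positivity)]
  have : exp ε * (ε - 1) + 1 ≤ (exp ε - 1) ^ 2 := by nlinarith [exp_pos ε]
  exact mul_le_mul_of_nonneg_left this k.cast_nonneg

section keyEntropy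

variable {k : ℕ} {ε : ℝ}

theorem hasDerivAt_keyEntropy_of_nonneg (hk : 0 < k) (hε : 0 < ε) {x : ℝ} (hx : 0 ≤ x) :
    HasDerivAt (keyEntropy k ε)
      ((exp ε - 1) ^ 2 * (x - keyThreshold k ε) / (x * (exp ε - 1) + k) ^ 2) x := by
  have : 0 < exp ε - 1 := sub_pos.2 (one_lt_exp_iff.2 hε)
  exact hasDerivAt_keyEntropy hε.ne' (by positivity)

theorem continuousOn_keyEntropy (hk : 0 < k) (hε : 0 < ε) :
    ContinuousOn (keyEntropy k ε) (Set.Ici 0) := fun _ hx =>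
  (hasDerivAt_keyEntropy_of_nonneg hk hε hx).continuousAt.continuousWithinAt

theorem keyEntropy_antitoneOn (hk : 0 < k) (hε : 0 < ε) :
    AntitoneOn (keyEntropy k ε) (Set.Icc 0 (keyThreshold k ε)) := by
  refine antitoneOn_of_hasDerivWithinAt_nonpos (convex_Icc _ _) (f' := fun x =>
    (exp ε - 1) ^ 2 * (x - keyThreshold k ε) / (x * (exp ε - 1) + k) ^ 2)
    ((continuousOn_keyEntropy hk hε).mono Set.Icc_subset_Ici_self) (fun x hx => ?_) fun x hx => ?_
  · rw [interior_Icc] at hx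
    exact (hasDerivAt_keyEntropy_of_nonneg hk hε hx.1.le).hasDerivWithinAt
  · rw [interior_Icc] at hx
    have : x - keyThreshold k ε ≤ 0 := by linarith [hx.2]
    exact div_nonpos_of_nonpos_of_nonneg (mul_nonpos_of_nonneg_of_nonpos (sq_nonneg _) this)
      (sq_nonneg _)

theorem keyEntropy_monotoneOn (hk : 0 < k) (hε : 0 < ε) :
    MonotoneOn (keyEntropy k ε) (Set.Ici (keyThreshold k ε)) := by
  have hsub : Set.Ici (keyThreshold k ε) ⊆ Set.Ici 0 :=
    Set.Ici_subset_Ici.2 (keyThreshold_nonneg k ε)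
  refine monotoneOn_of_hasDerivWithinAt_nonneg (convex_Ici _) (f' := fun x =>
    (exp ε - 1) ^ 2 * (x - keyThreshold k ε) / (x * (exp ε - 1) + k) ^ 2)
    ((continuousOn_keyEntropy hk hε).mono hsub) (fun x hx => ?_) fun x hx => ?_
  · rw [interior_Ici] at hx
    exact (hasDerivAt_keyEntropy_of_nonneg hk hε (hsub hx.out.le)).hasDerivWithinAt
  · rw [interior_Ici] at hx
    have : 0 ≤ x - keyThreshold k ε := by linarith [hx.out]
    positivity

theorem min_keyEntropy_ceil_floor_le (hk : 0 < k) (hε : 0 < ε) (s : ℕ) :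
    min (keyEntropy k ε ⌈keyThreshold k ε⌉₊) (keyEntropy k ε ⌊keyThreshold k ε⌋₊)
      ≤ keyEntropy k ε s := by
  set l := keyThreshold k ε
  have hl : 0 ≤ l := keyThreshold_nonneg k ε
  rcases le_or_gt (s : ℝ) l with hsl | hls
  · refine (min_le_right _ _).trans <| keyEntropy_antitoneOn hk hε ⟨s.cast_nonneg, hsl⟩
      ⟨Nat.cast_nonneg _, Nat.floor_le hl⟩ ?_
    exact_mod_cast Nat.le_floor hsl
  · refine (min_le_left _ _).trans <| keyEntropy_monotoneOn hk hε (Nat.le_ceil l) hls.le ?_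
    exact_mod_cast Nat.ceil_le.2 hls.le

end keyEntropy

section BoundedRatio

variable {S : Type*} [Fintype S]

/-- For `c = exp ε` these are the `ε`-DP distributions of a single sample, since any two
one-sample databases are neighbors. -/
def boundedRatioDists (S : Type*) [Fintype S] (c : ℝ) : Set (S → ℝ) :=
  {q | IsDist q ∧ ∀ a b, q a ≤ c * q b}

theorem isCompact_boundedRatioDists (c : ℝ) : IsCompact (boundedRatioDists S c) := by
  have h : boundedRatioDists S c = stdSimplex ℝ S ∩ ⋂ a, ⋂ b, {q | q a ≤ c * q b} := by
    ext q
    simp [boundedRatioDists, stdSimplex, IsDist]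
  rw [h]
  exact (isCompact_stdSimplex ℝ S).inter_right <|
    isClosed_iInter fun a => isClosed_iInter fun b => isClosed_le (by fun_prop) (by fun_prop)

theorem pos_of_mem_boundedRatioDists {c : ℝ} (hc : 0 ≤ c) {q : S → ℝ}
    (hq : q ∈ boundedRatioDists S c) (a : S) : 0 < q a := by
  by_contra! ha
  have h := sum_le_sum fun b (_ : b ∈ univ) => hq.2 b a
  rw [hq.1.2, sum_const, nsmul_eq_mul] at h
  nlinarith [mul_nonpos_of_nonneg_of_nonpos hc ha, (Fintype.card S).cast_nonneg (α := ℝ)]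

theorem mem_boundedRatioDists_of_bounds {c u : ℝ} (hc : 0 ≤ c) (hu : 0 ≤ u) {q : S → ℝ}
    (hsum : ∑ a, q a = 1) (hq : ∀ a, u ≤ q a ∧ q a ≤ c * u) : q ∈ boundedRatioDists S c :=
  ⟨⟨fun a => hu.trans (hq a).1, hsum⟩, fun a b =>
    (hq a).2.trans (mul_le_mul_of_nonneg_left (hq b).1 hc)⟩

open Filter Topology in
theorem eventually_add_smul_mem_boundedRatioDists {c : ℝ} (hc : 1 < c) {p : S → ℝ}
    (hp : p ∈ boundedRatioDists S c) {a₀ : S} (ha₀ : ∀ a, p a₀ ≤ p a) {d : S → ℝ}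
    (hd₀ : ∀ a, p a = p a₀ → d a = 1) (hd₁ : ∀ a, p a = c * p a₀ → d a = c)
    (hd : ∑ a, d a = 0) :
    ∀ᶠ t in 𝓝 (0 : ℝ), p + t • d ∈ boundedRatioDists S c := by
  set m := p a₀
  have hpos : ∀ᶠ t in 𝓝 (0 : ℝ), 0 < m + t :=
    ContinuousAt.eventually_lt (f := fun _ => 0) (by fun_prop) (by fun_prop)
      (by simpa using pos_of_mem_boundedRatioDists (by linarith) hp a₀)
  have hbounds : ∀ a, ∀ᶠ t in 𝓝 (0 : ℝ), m + t ≤ p a + t * d a ∧ p a + t * d a ≤ c * (m + t) := by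
    intro a
    by_cases h₀ : p a = m
    · exact hpos.mono fun t ht => ⟨by rw [hd₀ a h₀, h₀]; linarith, by rw [hd₀ a h₀, h₀]; nlinarith⟩
    by_cases h₁ : p a = c * m
    · exact hpos.mono fun t ht => ⟨by rw [hd₁ a h₁, h₁]; nlinarith, by rw [hd₁ a h₁, h₁]; linarith⟩
    have hlo : m < p a := lt_of_le_of_ne (ha₀ a) (Ne.symm h₀)
    have hhi : p a < c * m := lt_of_le_of_ne (hp.2 a a₀) h₁
    exact ((ContinuousAt.eventually_lt (by fun_prop) (by fun_prop) (by simpa using hlo)).and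
      (ContinuousAt.eventually_lt (by fun_prop) (by fun_prop) (by simpa using hhi))).mono
      fun t ht => ⟨ht.1.le, ht.2.le⟩
  filter_upwards [hpos, eventually_all.2 hbounds] with t ht hb
  exact mem_boundedRatioDists_of_bounds (by linarith) ht.le
    (by simp [sum_add_distrib, ← mul_sum, hd, hp.1.2]) hb

open Filter Topology in
theorem exists_perturbation_of_ne {c : ℝ} (hc : 1 < c) {p : S → ℝ}
    (hp : p ∈ boundedRatioDists S c) {a₀ i : S} (ha₀ : ∀ a, p a₀ ≤ p a) (hi₀ : p i ≠ p a₀)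
    (hi₁ : p i ≠ c * p a₀) :
    ∃ d : S → ℝ, d ≠ 0 ∧ p + d ∈ boundedRatioDists S c ∧ p - d ∈ boundedRatioDists S c := by
  classical
  set m := p a₀
  have hm : m ≠ c * m := (lt_mul_left (pos_of_mem_boundedRatioDists (by linarith) hp a₀) hc).ne
  -- Entries equal to `m` move with `m`, entries equal to `c * m` with `c * m`, and entry `i`,
  -- strictly inside `(m, c * m)`, keeps the total mass equal to 1.
  set ι : S → ℝ := fun a => if p a = m then 1 else if p a = c * m then c else 0
  set d : S → ℝ := ι - Pi.single i (∑ b, ι b)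
  have hd_i : d i = -∑ b, ι b := by simp [d, ι, hi₀, hi₁]
  have hι_pos : 0 < ∑ b, ι b := by
    refine lt_of_lt_of_le (show (0 : ℝ) < ι a₀ by simp [ι, m])
      (single_le_sum (fun b _ => ?_) (mem_univ a₀))
    simp only [ι]
    split_ifs <;> linarith
  have hd₀ : ∀ a, p a = m → d a = 1 := fun a ha => by
    have : a ≠ i := by rintro rfl; exact hi₀ ha
    simp [d, ι, ha, this]
  have hd₁ : ∀ a, p a = c * m → d a = c := fun a ha => by
    have : a ≠ i := by rintro rfl; exact hi₁ ha
    simp [d, ι, ha, this, hm.symm]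
  have hG := eventually_add_smul_mem_boundedRatioDists hc hp ha₀ hd₀ hd₁
    (by simp [d, sum_sub_distrib])
  have hG' := (continuous_neg.tendsto' 0 0 neg_zero).eventually hG
  obtain ⟨t, ⟨hGt, hGt'⟩, ht⟩ :=
    ((hG.and hG').filter_mono nhdsWithin_le_nhds |>.and self_mem_nhdsWithin).exists
      (f := 𝓝[≠] (0 : ℝ))
  refine ⟨t • d, fun h => ?_, hGt, by simpa [sub_eq_add_neg] using hGt'⟩
  have := congrFun h i
  simp only [Pi.smul_apply, smul_eq_mul, hd_i, Pi.zero_apply, mul_neg, neg_eq_zero] at this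
  exact mul_ne_zero ht hι_pos.ne' this

theorem eq_or_eq_of_isMinOn_Hent {c : ℝ} (hc : 1 < c) {p : S → ℝ}
    (hp : p ∈ boundedRatioDists S c) (hmin : IsMinOn Hent (boundedRatioDists S c) p) {a₀ : S}
    (ha₀ : ∀ a, p a₀ ≤ p a) (a : S) : p a = p a₀ ∨ p a = c * p a₀ := by
  by_contra! h
  obtain ⟨d, hd, hplus, hminus⟩ := exists_perturbation_of_ne hc hp ha₀ h.1 h.2
  have hmid : (1 / 2 : ℝ) • (p + d) + (1 / 2 : ℝ) • (p - d) = p := by module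
  have hlt := strictConcaveOn_Hent.2 (fun a => hplus.1.1 a) (fun a => hminus.1.1 a)
    (fun h => hd <| funext fun a => by
      have := congrFun h a
      simp only [Pi.add_apply, Pi.sub_apply] at this
      simp only [Pi.zero_apply]
      linarith)
    (by norm_num : (0 : ℝ) < 1 / 2)
    (by norm_num : (0 : ℝ) < 1 / 2) (by norm_num)
  rw [hmid, smul_eq_mul, smul_eq_mul] at hlt
  linarith [isMinOn_iff.1 hmin _ hplus, isMinOn_iff.1 hmin _ hminus]

theorem exists_Hent_eq_keyEntropy_of_twoValued {q : S → ℝ} (hq : IsDist q) {ε m : ℝ}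
    (htwo : ∀ a, q a = m ∨ q a = exp ε * m) :
    ∃ s ≤ Fintype.card S, Hent q = keyEntropy (Fintype.card S) ε s := by
  classical
  set n₁ := #{a | q a = exp ε * m}
  set n₀ := #{a | ¬ q a = exp ε * m}
  have hn : n₀ + n₁ = Fintype.card S := by
    rw [add_comm]; exact card_filter_add_card_filter_not _
  have hsplit : ∀ g : ℝ → ℝ, ∑ a, g (q a) = n₀ * g m + n₁ * g (exp ε * m) := by
    intro g
    have h₁ : ∀ a ∈ ({a | q a = exp ε * m} : Finset S), g (q a) = g (exp ε * m) :=
      fun a ha => by rw [(mem_filter.1 ha).2]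
    have h₀ : ∀ a ∈ ({a | ¬ q a = exp ε * m} : Finset S), g (q a) = g m :=
      fun a ha => by rw [(htwo a).resolve_right (mem_filter.1 ha).2]
    rw [← sum_filter_add_sum_filter_not univ fun a => q a = exp ε * m, sum_congr rfl h₁,
      sum_congr rfl h₀, sum_const, sum_const, nsmul_eq_mul, nsmul_eq_mul, add_comm]
  refine ⟨n₁, by omega, ?_⟩
  rw [Hent_eq_sum_negMulLog, hsplit]
  exact negMulLog_twoLevel_eq_keyEntropy hn ((hsplit id).symm.trans hq.2)

end BoundedRatio

theorem min_Hent_keyDist_le_Hent {k : ℕ} {ε : ℝ} (hε : 0 < ε) {q : Fin k → ℝ} (hq : IsDist q)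
    (hratio : ∀ a b, q a ≤ exp ε * q b) :
    min (Hent (keyDist k ⌈keyThreshold k ε⌉₊ ε)) (Hent (keyDist k ⌊keyThreshold k ε⌋₊ ε))
      ≤ Hent q := by
  have hk : 0 < k := by
    rcases Nat.eq_zero_or_pos k with rfl | hk
    · simp [IsDist] at hq
    · exact hk
  have : Nonempty (Fin k) := ⟨⟨0, hk⟩⟩
  have hE : 1 < exp ε := one_lt_exp_iff.2 hε
  obtain ⟨p, hp, hmin⟩ := (isCompact_boundedRatioDists (exp ε)).exists_isMinOn ⟨q, hq, hratio⟩
    continuous_Hent.continuousOn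
  obtain ⟨a₀, ha₀⟩ := Finite.exists_min p
  obtain ⟨s, -, hps⟩ := exists_Hent_eq_keyEntropy_of_twoValued hp.1
    (eq_or_eq_of_isMinOn_Hent hE hp hmin ha₀)
  have hceil : ⌈keyThreshold k ε⌉₊ ≤ k := Nat.ceil_le.2 (keyThreshold_le k hε)
  rw [Hent_keyDist hk hceil, Hent_keyDist hk ((Nat.floor_le_ceil _).trans hceil)]
  calc _ ≤ keyEntropy k ε s := min_keyEntropy_ceil_floor_le hk hε s
    _ = Hent p := by rw [hps, Fintype.card_fin]
    _ ≤ Hent q := hmin ⟨hq, hratio⟩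

section Databases

variable {α : Type*}

theorem sum_fin_succ_pi [Fintype α] {T : ℕ} (f : (Fin (T + 1) → α) → ℝ) :
    ∑ x, f x = ∑ a, ∑ y : Fin T → α, f (Fin.cons a y) := by
  rw [← (Fin.consEquiv fun _ => α).sum_comp, Fintype.sum_prod_type]
  rfl

theorem neighbor_cons_left {T : ℕ} {a b : α} (hab : a ≠ b) (y : Fin T → α) :
    Neighbor (Fin.cons a y : Fin (T + 1) → α) (Fin.cons b y) :=
  ⟨0, by simpa using hab, fun s hs => by
    obtain ⟨j, rfl⟩ := Fin.exists_succ_eq.2 hs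
    simp⟩

theorem neighbor_cons_right {T : ℕ} (a : α) {y y' : Fin T → α} (h : Neighbor y y') :
    Neighbor (Fin.cons a y : Fin (T + 1) → α) (Fin.cons a y') := by
  obtain ⟨t, ht, hne⟩ := h
  refine ⟨t.succ, by simpa using ht, Fin.cases (by simp) fun j hj => ?_⟩
  simpa using hne j (fun h => hj (h ▸ rfl))

variable [Fintype α] {ε : ℝ}

theorem natCast_mul_le_Hent {c : ℝ} (hε : 0 ≤ ε)
    (hc : ∀ q : α → ℝ, IsDist q → (∀ a b, q a ≤ exp ε * q b) → c ≤ Hent q) :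
    ∀ {T : ℕ} (P : (Fin T → α) → ℝ), IsDist P →
      (∀ x x', Neighbor x x' → P x ≤ exp ε * P x') → T * c ≤ Hent P
  | 0, P, hP, _ => by
    have h1 : P default = 1 := by rw [← hP.2, Fintype.sum_unique]
    simp [Hent_eq_sum_negMulLog, h1]
  | T + 1, P, hP, hDP => by
    set q : α → ℝ := fun a => ∑ y, P (Fin.cons a y)
    set r : α → (Fin T → α) → ℝ := fun a y => P (Fin.cons a y) / q a
    have hq0 : ∀ a, 0 ≤ q a := fun a => sum_nonneg fun y _ => hP.1 _
    have hq : IsDist q := ⟨hq0, by rw [← hP.2, sum_fin_succ_pi]⟩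
    have hq_ratio : ∀ a b, q a ≤ exp ε * q b := by
      intro a b
      rcases eq_or_ne a b with rfl | hab
      · nlinarith [hq0 a, one_le_exp hε]
      · rw [mul_sum]
        exact sum_le_sum fun y _ => hDP _ _ (neighbor_cons_left hab y)
    have hchain : Hent P = Hent q + ∑ a, q a * Hent (r a) := by
      rw [Hent_eq_sum_negMulLog, sum_fin_succ_pi, Hent_eq_sum_negMulLog, ← sum_add_distrib]
      exact sum_congr rfl fun a _ => sum_negMulLog_eq_negMulLog_sum_add _ fun y => hP.1 _
    have hcond : ∀ a, q a * (T * c) ≤ q a * Hent (r a) := by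
      intro a
      rcases (hq0 a).eq_or_lt with ha | ha
      · simp [← ha]
      refine mul_le_mul_of_nonneg_left (natCast_mul_le_Hent hε hc (r a) ⟨fun y =>
        div_nonneg (hP.1 _) ha.le, by rw [← sum_div, div_self ha.ne']⟩ fun y y' hyy' => ?_) ha.le
      rw [← mul_div_assoc, div_le_div_iff_of_pos_right ha]
      exact hDP _ _ (neighbor_cons_right a hyy')
    calc ((T + 1 : ℕ) : ℝ) * c = c + ∑ a, q a * (T * c) := by
          rw [← sum_mul, hq.2]; push_cast; ring
      _ ≤ Hent q + ∑ a, q a * Hent (r a) :=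
          add_le_add (hc q hq hq_ratio) (sum_le_sum fun a _ => hcond a)
      _ = Hent P := hchain.symm

end Databases

theorem stmt16_general (k T : ℕ) (ε : ℝ) (hε : 0 < ε)
    (l : ℝ) (hl : l = (k : ℝ) * (Real.exp ε * (ε - 1) + 1) / (Real.exp ε - 1) ^ 2)
    (P : (Fin T → Fin k) → ℝ) (hP : IsDist P)
    (hDP : ∀ x x', Neighbor x x' → P x ≤ Real.exp ε * P x') :
    (T : ℝ) * min (Hent (keyDist k ⌈l⌉₊ ε)) (Hent (keyDist k ⌊l⌋₊ ε)) ≤ Hent P := by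
  subst hl
  exact natCast_mul_le_Hent hε.le (fun _ hq hratio => min_Hent_keyDist_le_Hent hε hq hratio)
    P hP hDP

/-- **Entropy lower bound via Lemma 6.2 of the paper:** every `ε`-DP distribution on
`[k]^T` (ratio at most `e^ε` between neighboring databases) has Shannon entropy at least
`T · min_{s ∈ {⌈l⌉,⌊l⌋}} H(q^s)`, with `l = k(e^ε(ε−1)+1)/(e^ε−1)²`. -/
theorem stmt16 (k T : ℕ) (hk : 2 ≤ k) (hT : 1 ≤ T) (ε : ℝ) (hε : 0 < ε)
    (l : ℝ) (hl : l = (k : ℝ) * (Real.exp ε * (ε - 1) + 1) / (Real.exp ε - 1) ^ 2)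
    (P : (Fin T → Fin k) → ℝ) (hP : IsDist P)
    (hDP : ∀ x x', Neighbor x x' → P x ≤ Real.exp ε * P x') :
    (T : ℝ) * min (Hent (keyDist k ⌈l⌉₊ ε)) (Hent (keyDist k ⌊l⌋₊ ε)) ≤ Hent P :=
  stmt16_general k T ε hε l hl P hP hDP
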